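/- Let $m \ge 2$, $p \ge 1$, and let $A_1, \dots, A_p$ be real symmetric $m \times m$ matrices each with trace zero. Then $\sum_{r=1}^{p} \sum_{s=1}^{p} \| [A_r, A_s] \|^2 \le \left( \sum_{r=1}^{p} \|A_r\|^2 \right)^2$, where $[A_r, A_s] = A_r A_s - A_s A_r$ is the matrix commutator and $\|\cdot\|$ is the Frobenius norm. -/

import Mathlib

open Matrix BigOperators

/-- Squared Frobenius norm of a real `m × m` matrix: `‖A‖² = ∑ i j, A i j ^ 2`. -/
def frobSq {m : ℕ} (A : Matrix (Fin m) (Fin m) ℝ) : ℝ := ∑ i, ∑ j, (A i j) ^ 2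

/-!
Lu's proof. Rotating the family by an orthogonal matrix that diagonalizes its Gram matrix changes
neither side, so the `A r` may be assumed pairwise orthogonal. Writing `A r = ‖A r‖ • E r`, the
left side is the quadratic form `x ⬝ᵥ N *ᵥ x` at `x r = ‖A r‖²`, where `N r t = ‖⁅E r, E t⁆‖²`,
so it suffices that this form is at most `1` on the standard simplex. At a maximizer `b` the
first-order conditions give `(N *ᵥ b) r ≤ (N *ᵥ b) k` whenever `b k > 0`, so it is enough that
`(N *ᵥ b) k ≤ 1` for an index `k` of largest weight. This is a bound on one row of commutators:
for symmetric `X` and pairwise orthogonal symmetric `Y r` with `‖Y r‖² ≤ W`,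
`∑ r, ‖⁅X, Y r⁆‖² ≤ ‖X‖² (∑ r, ‖Y r‖² + W)`. With `X = diagonal λ` the left side is
`∑ i < j, (λ i - λ j)² w i j`, where Bessel's inequality gives `w i j ≤ W`; peeling off the
weights layer by layer reduces it to `∑ (i, j) ∈ S, (λ i - λ j)² ≤ (#S + 1) ∑ i, λ i²`, the bound
`#S + 1` on the largest Laplacian eigenvalue of a graph with edge set `S`.
-/

open Finset

section IncidenceVectors

variable {ι : Type*} [Fintype ι] [LinearOrder ι]

def incidenceVec (e : ι × ι) : ι → ℝ := Pi.single e.1 1 - Pi.single e.2 1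

theorem dotProduct_incidenceVec (x : ι → ℝ) (e : ι × ι) :
    x ⬝ᵥ incidenceVec e = x e.1 - x e.2 := by
  simp [incidenceVec, dotProduct_sub, dotProduct_single]

theorem incidenceVec_dotProduct_self {e : ι × ι} (he : e.1 < e.2) :
    incidenceVec e ⬝ᵥ incidenceVec e = 2 := by
  rw [dotProduct_incidenceVec]
  norm_num [incidenceVec, he.ne, he.ne']

theorem abs_incidenceVec_dotProduct_le_one {e f : ι × ι} (he : e.1 < e.2) (hf : f.1 < f.2)
    (hef : e ≠ f) : |incidenceVec e ⬝ᵥ incidenceVec f| ≤ 1 := by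
  obtain ⟨a, b⟩ := e
  obtain ⟨c, d⟩ := f
  rw [dotProduct_incidenceVec]
  simp only [incidenceVec, Pi.sub_apply, Pi.single_apply] at *
  split_ifs <;> simp_all [lt_asymm he]

theorem dotProduct_self_sum_smul_incidenceVec_le (S : Finset (ι × ι)) (hS : ∀ e ∈ S, e.1 < e.2)
    (t : ι × ι → ℝ) :
    (∑ e ∈ S, t e • incidenceVec e) ⬝ᵥ (∑ e ∈ S, t e • incidenceVec e)
      ≤ (#S + 1) * ∑ e ∈ S, t e ^ 2 := by
  have hterm : ∀ e ∈ S, ∀ f ∈ S, t e * t f * (incidenceVec e ⬝ᵥ incidenceVec f)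
      ≤ |t e| * |t f| + if e = f then t e ^ 2 else 0 := by
    intro e he f hf
    by_cases hef : e = f
    · subst hef
      rw [incidenceVec_dotProduct_self (hS e he), if_pos rfl, abs_mul_abs_self]
      exact le_of_eq (by ring)
    · rw [if_neg hef, add_zero, ← abs_mul]
      calc t e * t f * (incidenceVec e ⬝ᵥ incidenceVec f)
          ≤ |t e * t f| * |incidenceVec e ⬝ᵥ incidenceVec f| := by
            rw [← abs_mul]; exact le_abs_self _
        _ ≤ |t e * t f| := mul_le_of_le_one_right (abs_nonneg _)
            (abs_incidenceVec_dotProduct_le_one (hS e he) (hS f hf) hef)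
  calc (∑ e ∈ S, t e • incidenceVec e) ⬝ᵥ (∑ e ∈ S, t e • incidenceVec e)
      = ∑ e ∈ S, ∑ f ∈ S, t e * t f * (incidenceVec e ⬝ᵥ incidenceVec f) := by
        simp only [sum_dotProduct, dotProduct_sum, smul_dotProduct, dotProduct_smul, smul_eq_mul,
          mul_sum]
        exact sum_congr rfl fun _ _ => sum_congr rfl fun _ _ => by rw [dotProduct_comm]; ring
    _ ≤ ∑ e ∈ S, ∑ f ∈ S, (|t e| * |t f| + if e = f then t e ^ 2 else 0) :=
        sum_le_sum fun e he => sum_le_sum fun f hf => hterm e he f hf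
    _ = (∑ e ∈ S, |t e|) ^ 2 + ∑ e ∈ S, t e ^ 2 := by
        simp only [sum_add_distrib, sum_ite_eq, ← mul_sum, ← sum_mul, sq]
        exact congrArg _ (sum_congr rfl fun e he => by rw [if_pos he])
    _ ≤ #S * ∑ e ∈ S, |t e| ^ 2 + ∑ e ∈ S, t e ^ 2 := by gcongr; exact sq_sum_le_card_mul_sum_sq
    _ = (#S + 1) * ∑ e ∈ S, t e ^ 2 := by simp only [sq_abs]; ring

theorem sum_sq_sub_le_card_add_one_mul (x : ι → ℝ) (S : Finset (ι × ι))
    (hS : ∀ e ∈ S, e.1 < e.2) :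
    ∑ e ∈ S, (x e.1 - x e.2) ^ 2 ≤ (#S + 1) * ∑ i, x i ^ 2 := by
  set t : ι × ι → ℝ := fun e => x e.1 - x e.2
  set Q := ∑ e ∈ S, t e ^ 2
  set v := ∑ e ∈ S, t e • incidenceVec e
  have hxv : x ⬝ᵥ v = Q := by
    simp only [v, Q, dotProduct_sum, dotProduct_smul, dotProduct_incidenceVec, smul_eq_mul, sq, t]
  have hcs : Q ^ 2 ≤ (∑ i, x i ^ 2) * (v ⬝ᵥ v) := by
    simpa only [← hxv, dotProduct, sq] using sum_mul_sq_le_sq_mul_sq univ x v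
  have hvv := dotProduct_self_sum_smul_incidenceVec_le S hS t
  have hQ : Q * Q ≤ ((#S + 1) * ∑ i, x i ^ 2) * Q := by
    nlinarith [sum_nonneg fun i (_ : i ∈ univ) => sq_nonneg (x i)]
  have hQ0 : 0 ≤ Q := sum_nonneg fun e _ => sq_nonneg (t e)
  rcases hQ0.eq_or_lt with h | h
  · rw [← h]; positivity
  · exact le_of_mul_le_mul_right hQ h

end IncidenceVectors

theorem sum_mul_le_of_forall_subset_sum_le {ι : Type*} [DecidableEq ι] (Q : Finset ι)
    (d w : ι → ℝ) {α W : ℝ} (hd : ∀ S ⊆ Q, ∑ e ∈ S, d e ≤ (#S + 1) * α)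
    (hw0 : ∀ e ∈ Q, 0 ≤ w e) (hwW : ∀ e ∈ Q, w e ≤ W) (hW : 0 ≤ W) :
    ∑ e ∈ Q, d e * w e ≤ α * (∑ e ∈ Q, w e + W) := by
  induction Q using Finset.strongInduction generalizing w W with
  | H Q ih =>
  -- Layer-cake: the smallest weight `μ` is spread over all of `Q`, the excess `w - μ` recurses.
  rcases Q.eq_empty_or_nonempty with rfl | hQ
  · have hα : 0 ≤ α := by simpa using hd ∅ (empty_subset _)
    simpa using mul_nonneg hα hW
  obtain ⟨e₀, he₀, hmin⟩ := Q.exists_min_image w hQ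
  set μ := w e₀
  set R := Q.erase e₀
  have hR : R ⊆ Q := erase_subset _ _
  have hcard : (#R : ℝ) + 1 = #Q := by exact_mod_cast card_erase_add_one he₀
  have hwR : ∑ e ∈ Q, w e = ∑ e ∈ R, w e + μ := (sum_erase_add Q w he₀).symm
  have hlayer : ∑ e ∈ Q, d e * w e = μ * ∑ e ∈ Q, d e + ∑ e ∈ R, d e * (w e - μ) := by
    have hμ : ∑ e ∈ Q, d e * (w e - μ) = ∑ e ∈ R, d e * (w e - μ) := by
      rw [← sum_erase_add Q _ he₀, sub_self, mul_zero, add_zero]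
    rw [← hμ, mul_sum, ← sum_add_distrib]
    exact sum_congr rfl fun e _ => by ring
  have hrest : ∑ e ∈ R, d e * (w e - μ) ≤ α * (∑ e ∈ R, (w e - μ) + (W - μ)) :=
    ih R (erase_ssubset he₀) (fun e => w e - μ) (fun S hS => hd S (hS.trans hR))
      (fun e he => sub_nonneg.2 (hmin e (hR he)))
      (fun e he => sub_le_sub_right (hwW e (hR he)) μ) (sub_nonneg.2 (hwW e₀ he₀))
  have htop : μ * ∑ e ∈ Q, d e ≤ μ * ((#Q + 1) * α) :=
    mul_le_mul_of_nonneg_left (hd Q subset_rfl) (hw0 e₀ he₀)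
  rw [sum_sub_distrib, sum_const, nsmul_eq_mul] at hrest
  rw [← hcard] at htop
  rw [hlayer, hwR]
  linarith

theorem sum_sum_eq_two_mul_sum_lt {ι : Type*} [Fintype ι] [LinearOrder ι] (g : ι → ι → ℝ)
    (hdiag : ∀ i, g i i = 0) (hsymm : ∀ i j, g i j = g j i) :
    ∑ i, ∑ j, g i j = 2 * ∑ e : ι × ι with e.1 < e.2, g e.1 e.2 := by
  have hsplit : ∀ i j, g i j = (if i < j then g i j else 0) + (if j < i then g j i else 0) := by
    intro i j
    rcases lt_trichotomy i j with h | rfl | h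
    · simp [h, h.not_gt]
    · simp [hdiag]
    · simp [h, h.not_gt, hsymm i j]
  rw [sum_filter, Fintype.sum_prod_type,
    sum_congr rfl fun i _ => sum_congr rfl fun j _ => hsplit i j]
  simp only [sum_add_distrib]
  rw [Finset.sum_comm (f := fun i j => if j < i then g j i else 0)]
  ring

theorem sum_sum_sq_sub_mul_le {ι : Type*} [Fintype ι] (x : ι → ℝ) (w : ι → ι → ℝ)
    (hsymm : ∀ i j, w i j = w j i) (hw0 : ∀ i j, 0 ≤ w i j) {W : ℝ} (hW0 : 0 ≤ W)
    (hwW : ∀ i j, i ≠ j → 2 * w i j ≤ W) :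
    ∑ i, ∑ j, (x i - x j) ^ 2 * w i j ≤ (∑ i, x i ^ 2) * (∑ i, ∑ j, w i j + W) := by
  -- Any linear order serves to list each unordered pair once.
  let : LinearOrder ι := LinearOrder.lift' _ (Fintype.equivFin ι).injective
  set P := ({e : ι × ι | e.1 < e.2} : Finset (ι × ι))
  have hlhs : ∑ i, ∑ j, (x i - x j) ^ 2 * w i j
      = ∑ e ∈ P, (x e.1 - x e.2) ^ 2 * (2 * w e.1 e.2) := by
    rw [sum_sum_eq_two_mul_sum_lt _ (fun i => by simp) (fun i j => by rw [hsymm]; ring), mul_sum]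
    exact sum_congr rfl fun e _ => by ring
  have hoff : ∑ e ∈ P, 2 * w e.1 e.2 ≤ ∑ i, ∑ j, w i j := by
    calc ∑ e ∈ P, 2 * w e.1 e.2 = ∑ i, ∑ j, if i = j then 0 else w i j := by
          rw [sum_sum_eq_two_mul_sum_lt (fun i j => if i = j then 0 else w i j)
            (fun i => if_pos rfl) (fun i j => by simp only [eq_comm, hsymm i j]), mul_sum]
          exact sum_congr rfl fun e he => by rw [if_neg (mem_filter.1 he).2.ne]
      _ ≤ ∑ i, ∑ j, w i j := by
          gcongr with i _ j _
          split_ifs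
          exacts [hw0 i j, le_rfl]
  have hLP := sum_mul_le_of_forall_subset_sum_le P (fun e => (x e.1 - x e.2) ^ 2)
    (fun e => 2 * w e.1 e.2)
    (fun S hS => sum_sq_sub_le_card_add_one_mul x S fun e he => (mem_filter.1 (hS he)).2)
    (fun e _ => mul_nonneg zero_le_two (hw0 _ _))
    (fun e he => hwW _ _ (mem_filter.1 he).2.ne) hW0
  rw [hlhs]
  refine hLP.trans (mul_le_mul_of_nonneg_left (by linarith) ?_)
  exact sum_nonneg fun i _ => sq_nonneg (x i)

section StdSimplex

variable {ι : Type*} [Fintype ι]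

theorem pos_of_forall_le_of_mem_stdSimplex {b : ι → ℝ}
    (hb : b ∈ stdSimplex ℝ ι) {k : ι} (hk : ∀ u, b u ≤ b k) : 0 < b k := by
  by_contra! h
  have := sum_nonpos fun u (_ : u ∈ univ) => (hk u).trans h
  linarith [hb.2]

variable [DecidableEq ι]

theorem mulVec_apply_le_of_isMaxOn {N : Matrix ι ι ℝ} (hN : N.IsSymm) {b : ι → ℝ}
    (hb : b ∈ stdSimplex ℝ ι) (hmax : IsMaxOn (fun x => x ⬝ᵥ N *ᵥ x) (stdSimplex ℝ ι) b)
    (r : ι) {t : ι} (ht : 0 < b t) : (N *ᵥ b) r ≤ (N *ᵥ b) t := by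
  by_contra! hlt
  have hrt : r ≠ t := by rintro rfl; exact lt_irrefl _ hlt
  set D := (N *ᵥ b) r - (N *ᵥ b) t
  have hD : 0 < D := sub_pos.2 hlt
  -- Moving mass `ε` from `t` to `r` raises the form by `ε * (2 * D + ε * C)`, which is
  -- positive for small `ε`.
  set v : ι → ℝ := Pi.single r 1 - Pi.single t 1
  set C := v ⬝ᵥ N *ᵥ v
  set ε := min (b t) (D / (|C| + 1))
  have hε : 0 < ε := lt_min ht (by positivity)
  have hεt : ε ≤ b t := min_le_left _ _
  have hεD : ε * (|C| + 1) ≤ D := (le_div_iff₀ (by positivity)).1 (min_le_right _ _)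
  have hvb : v ⬝ᵥ N *ᵥ b = D := by simp [v, sub_dotProduct, single_dotProduct, D]
  have hbv : b ⬝ᵥ N *ᵥ v = D := by
    rw [dotProduct_mulVec, ← mulVec_transpose, hN.eq, dotProduct_comm, hvb]
  have hexpand : (b + ε • v) ⬝ᵥ N *ᵥ (b + ε • v) = b ⬝ᵥ N *ᵥ b + ε * (2 * D + ε * C) := by
    simp only [mulVec_add, mulVec_smul, add_dotProduct, dotProduct_add, smul_dotProduct,
      dotProduct_smul, smul_eq_mul, hvb, hbv, C]
    ring
  have hmem : b + ε • v ∈ stdSimplex ℝ ι := by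
    refine ⟨fun u => ?_, ?_⟩
    · have := hb.1 u
      simp only [v, Pi.add_apply, Pi.smul_apply, Pi.sub_apply, Pi.single_apply, smul_eq_mul]
      split_ifs <;> subst_vars <;> linarith
    · simp [v, sum_add_distrib, ← mul_sum, hb.2]
  have hle := isMaxOn_iff.1 hmax _ hmem
  rw [hexpand] at hle
  have hεC : -(ε * |C|) ≤ ε * C := by
    rw [← mul_neg]; exact mul_le_mul_of_nonneg_left (neg_abs_le C) hε.le
  have hgain : 0 < 2 * D + ε * C := by linarith
  linarith [mul_pos hε hgain]

theorem dotProduct_mulVec_le_one_of_mem_stdSimplex {N : Matrix ι ι ℝ} (hN : N.IsSymm)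
    (hargmax : ∀ b ∈ stdSimplex ℝ ι, ∀ k, (∀ u, b u ≤ b k) → (N *ᵥ b) k ≤ 1)
    {x : ι → ℝ} (hx : x ∈ stdSimplex ℝ ι) : x ⬝ᵥ N *ᵥ x ≤ 1 := by
  obtain ⟨b, hb, hmax⟩ := (isCompact_stdSimplex ℝ ι).exists_isMaxOn ⟨x, hx⟩
    (by fun_prop : Continuous fun y : ι → ℝ => y ⬝ᵥ N *ᵥ y).continuousOn
  obtain ⟨k, -, hk⟩ := exists_max_image univ b (nonempty_of_sum_ne_zero (hb.2 ▸ one_ne_zero))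
  have hbk := pos_of_forall_le_of_mem_stdSimplex hb fun u => hk u (mem_univ u)
  calc x ⬝ᵥ N *ᵥ x ≤ b ⬝ᵥ N *ᵥ b := isMaxOn_iff.1 hmax x hx
    _ = ∑ u, b u * (N *ᵥ b) u := rfl
    _ ≤ ∑ u, b u * (N *ᵥ b) k := sum_le_sum fun u _ =>
        mul_le_mul_of_nonneg_left (mulVec_apply_le_of_isMaxOn hN hb hmax u hbk) (hb.1 u)
    _ = (N *ᵥ b) k := by rw [← sum_mul, hb.2, one_mul]
    _ ≤ 1 := hargmax b hb k fun u => hk u (mem_univ u)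

theorem dotProduct_mulVec_le_sq_sum {N : Matrix ι ι ℝ} (hN : N.IsSymm)
    (hargmax : ∀ b ∈ stdSimplex ℝ ι, ∀ k, (∀ u, b u ≤ b k) → (N *ᵥ b) k ≤ 1)
    {x : ι → ℝ} (hx : 0 ≤ x) : x ⬝ᵥ N *ᵥ x ≤ (∑ i, x i) ^ 2 := by
  set σ := ∑ i, x i
  rcases (sum_nonneg fun i _ => hx i : 0 ≤ σ).eq_or_lt with h | h
  · rw [(Fintype.sum_eq_zero_iff_of_nonneg hx).1 h.symm, zero_dotProduct]
    positivity
  have hy : σ⁻¹ • x ∈ stdSimplex ℝ ι :=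
    ⟨fun i => mul_nonneg (inv_nonneg.2 h.le) (hx i), by
      simp only [Pi.smul_apply, smul_eq_mul, ← mul_sum, inv_mul_cancel₀ h.ne', σ]⟩
  have hle := dotProduct_mulVec_le_one_of_mem_stdSimplex hN hargmax hy
  simp only [mulVec_smul, smul_dotProduct, dotProduct_smul, smul_eq_mul] at hle
  have hσ : σ ≠ 0 := h.ne'
  calc x ⬝ᵥ N *ᵥ x = σ ^ 2 * (σ⁻¹ * (σ⁻¹ * (x ⬝ᵥ N *ᵥ x))) := by field_simp
    _ ≤ σ ^ 2 * 1 := by gcongr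
    _ = σ ^ 2 := mul_one _

end StdSimplex

attribute [local instance] LieRing.ofAssociativeRing LieAlgebra.ofAssociativeAlgebra

namespace Matrix

section Frobenius

variable {n ι : Type*} [Fintype n]

def frobInner (A B : Matrix n n ℝ) : ℝ := ∑ i, ∑ j, A i j * B i j

theorem frobSq_eq_frobInner {m : ℕ} (A : Matrix (Fin m) (Fin m) ℝ) :
    frobSq A = frobInner A A := by
  simp only [frobSq, frobInner, sq]

theorem frobInner_comm (A B : Matrix n n ℝ) : frobInner A B = frobInner B A := by
  simp only [frobInner, mul_comm]

theorem frobInner_self_nonneg (A : Matrix n n ℝ) : 0 ≤ frobInner A A :=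
  sum_nonneg fun _ _ => sum_nonneg fun _ _ => mul_self_nonneg _

theorem frobInner_self_eq_zero {A : Matrix n n ℝ} : frobInner A A = 0 ↔ A = 0 := by
  refine ⟨fun h => ?_, fun h => by simp [h, frobInner]⟩
  ext i j
  have hrows := (Fintype.sum_eq_zero_iff_of_nonneg fun i =>
    sum_nonneg fun j _ => mul_self_nonneg (A i j)).1 h
  have hrow := (Fintype.sum_eq_zero_iff_of_nonneg fun j => mul_self_nonneg (A i j)).1
    (congrFun hrows i)
  exact mul_self_eq_zero.1 (congrFun hrow j)

theorem frobInner_smul_left (c : ℝ) (A B : Matrix n n ℝ) :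
    frobInner (c • A) B = c * frobInner A B := by
  simp only [frobInner, smul_apply, smul_eq_mul, mul_sum, mul_assoc]

theorem frobInner_smul_right (c : ℝ) (A B : Matrix n n ℝ) :
    frobInner A (c • B) = c * frobInner A B := by
  rw [frobInner_comm, frobInner_smul_left, frobInner_comm]

theorem frobInner_smul_self (c : ℝ) (A : Matrix n n ℝ) :
    frobInner (c • A) (c • A) = c ^ 2 * frobInner A A := by
  rw [frobInner_smul_left, frobInner_smul_right, ← mul_assoc, sq]

theorem frobInner_add_right (A B C : Matrix n n ℝ) :
    frobInner A (B + C) = frobInner A B + frobInner A C := by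
  simp only [frobInner, add_apply, mul_add, sum_add_distrib]

theorem frobInner_sub_left (A B C : Matrix n n ℝ) :
    frobInner (A - B) C = frobInner A C - frobInner B C := by
  simp only [frobInner, sub_apply, sub_mul, sum_sub_distrib]

theorem frobInner_sub_right (A B C : Matrix n n ℝ) :
    frobInner A (B - C) = frobInner A B - frobInner A C := by
  rw [frobInner_comm, frobInner_sub_left, frobInner_comm, frobInner_comm C]

theorem frobInner_sum_left (s : Finset ι) (A : ι → Matrix n n ℝ) (B : Matrix n n ℝ) :
    frobInner (∑ r ∈ s, A r) B = ∑ r ∈ s, frobInner (A r) B := by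
  simp only [frobInner, Matrix.sum_apply, sum_mul]
  calc _ = ∑ i, ∑ r ∈ s, ∑ j, A r i j * B i j := sum_congr rfl fun _ _ => Finset.sum_comm
    _ = _ := Finset.sum_comm

theorem frobInner_sum_right (s : Finset ι) (A : Matrix n n ℝ) (B : ι → Matrix n n ℝ) :
    frobInner A (∑ r ∈ s, B r) = ∑ r ∈ s, frobInner A (B r) := by
  rw [frobInner_comm, frobInner_sum_left]
  simp only [frobInner_comm]

theorem frobInner_eq_trace (A B : Matrix n n ℝ) : frobInner A B = trace (Aᵀ * B) := by
  simp only [frobInner, trace, diag, mul_apply, transpose_apply]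
  exact Finset.sum_comm

theorem IsSymm.transpose_mul_mul {U A : Matrix n n ℝ} (hA : A.IsSymm) : (Uᵀ * A * U).IsSymm := by
  simp only [IsSymm, transpose_mul, transpose_transpose, hA.eq, Matrix.mul_assoc]

theorem sum_frobInner_sq_div_le (s : Finset ι) (Y : ι → Matrix n n ℝ)
    (horth : (s : Set ι).Pairwise fun r t => frobInner (Y r) (Y t) = 0) (X : Matrix n n ℝ) :
    ∑ r ∈ s, frobInner X (Y r) ^ 2 / frobInner (Y r) (Y r) ≤ frobInner X X := by
  set c : ι → ℝ := fun r => frobInner X (Y r) / frobInner (Y r) (Y r)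
  set P := ∑ r ∈ s, c r • Y r
  have hXP : frobInner X P = ∑ r ∈ s, frobInner X (Y r) ^ 2 / frobInner (Y r) (Y r) := by
    simp only [P, c, frobInner_sum_right, frobInner_smul_right]
    exact sum_congr rfl fun r _ => by ring
  have hPP : frobInner P P = ∑ r ∈ s, frobInner X (Y r) ^ 2 / frobInner (Y r) (Y r) := by
    simp only [P, frobInner_sum_left, frobInner_sum_right, frobInner_smul_left,
      frobInner_smul_right]
    refine sum_congr rfl fun r hr => ?_
    rw [sum_eq_single_of_mem r hr fun t ht htr => by rw [horth ht hr htr]; ring]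
    rcases eq_or_ne (frobInner (Y r) (Y r)) 0 with h | h
    · simp [c, h]
    · simp only [c]
      field_simp
  have hsq := frobInner_self_nonneg (X - P)
  rw [frobInner_sub_left, frobInner_sub_right, frobInner_sub_right, frobInner_comm P X, hXP,
    hPP] at hsq
  linarith

variable [DecidableEq n]

theorem frobInner_lie_sqrt_smul {x y : ℝ} (hx : 0 ≤ x) (hy : 0 ≤ y)
    (A B : Matrix n n ℝ) :
    frobInner ⁅√x • A, √y • B⁆ ⁅√x • A, √y • B⁆ = x * y * frobInner ⁅A, B⁆ ⁅A, B⁆ := by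
  rw [smul_lie, lie_smul, frobInner_smul_self, frobInner_smul_self, Real.sq_sqrt hx,
    Real.sq_sqrt hy, mul_assoc]

theorem frobInner_diagonal_self (d : n → ℝ) :
    frobInner (diagonal d) (diagonal d) = ∑ i, d i ^ 2 := by
  simp [frobInner, diagonal_apply, sq]

theorem frobInner_single_one (A : Matrix n n ℝ) (i j : n) :
    frobInner A (single i j 1) = A i j := by
  simp [frobInner, single_apply, ite_and]

theorem frobInner_conj {U : Matrix n n ℝ} (hU : U * Uᵀ = 1) (A B : Matrix n n ℝ) :
    frobInner (Uᵀ * A * U) (Uᵀ * B * U) = frobInner A B := by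
  rw [frobInner_eq_trace, frobInner_eq_trace]
  simp only [transpose_mul, transpose_transpose, Matrix.mul_assoc]
  rw [← Matrix.mul_assoc U Uᵀ, hU, Matrix.one_mul, trace_mul_comm, Matrix.mul_assoc,
    Matrix.mul_assoc, hU, Matrix.mul_one]

theorem conj_lie {U : Matrix n n ℝ} (hU : U * Uᵀ = 1) (A B : Matrix n n ℝ) :
    Uᵀ * ⁅A, B⁆ * U = ⁅Uᵀ * A * U, Uᵀ * B * U⁆ := by
  have hmul : ∀ X Y : Matrix n n ℝ, Uᵀ * X * U * (Uᵀ * Y * U) = Uᵀ * (X * Y) * U := by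
    intro X Y
    simp only [Matrix.mul_assoc, ← Matrix.mul_assoc U Uᵀ, hU, Matrix.one_mul]
  rw [Ring.lie_def, Ring.lie_def, hmul, hmul, Matrix.mul_sub, Matrix.sub_mul]

theorem lie_diagonal_apply (d : n → ℝ) (A : Matrix n n ℝ) (i j : n) :
    ⁅diagonal d, A⁆ i j = (d i - d j) * A i j := by
  rw [Ring.lie_def, sub_apply, diagonal_mul, mul_diagonal]
  ring

theorem IsSymm.exists_conj_eq_diagonal {A : Matrix n n ℝ} (hA : A.IsSymm) :
    ∃ U ∈ orthogonalGroup n ℝ, ∃ d : n → ℝ, Uᵀ * A * U = diagonal d := by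
  have hH : A.IsHermitian := by
    rwa [IsHermitian, conjTranspose_eq_transpose_of_trivial]
  refine ⟨hH.eigenvectorUnitary, hH.eigenvectorUnitary.2, hH.eigenvalues, ?_⟩
  have h := hH.conjStarAlgAut_star_eigenvectorUnitary
  simpa [Unitary.conjStarAlgAut_apply, star_eq_conjTranspose] using h

theorem two_mul_sum_sq_apply_le {s : Finset ι} {Z : ι → Matrix n n ℝ}
    (hsymm : ∀ r ∈ s, (Z r).IsSymm)
    (horth : (s : Set ι).Pairwise fun r t => frobInner (Z r) (Z t) = 0)
    {W : ℝ} (hW0 : 0 ≤ W) (hW : ∀ r ∈ s, frobInner (Z r) (Z r) ≤ W) {i j : n} (hij : i ≠ j) :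
    2 * ∑ r ∈ s, Z r i j ^ 2 ≤ W := by
  set E : Matrix n n ℝ := single i j 1 + single j i 1
  have hE : ∀ A : Matrix n n ℝ, A.IsSymm → frobInner A E = 2 * A i j := fun A hA => by
    rw [frobInner_add_right, frobInner_single_one, frobInner_single_one, hA.apply]
    ring
  have hEE : frobInner E E = 2 := by
    rw [hE E (by simp [E, IsSymm, transpose_add, transpose_single, add_comm])]
    simp [E, hij, hij.symm]
  have hbessel := sum_frobInner_sq_div_le s Z horth E
  have hterm : ∀ r ∈ s,
      Z r i j ^ 2 ≤ W / 4 * (frobInner E (Z r) ^ 2 / frobInner (Z r) (Z r)) := by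
    intro r hr
    rw [frobInner_comm, hE _ (hsymm r hr)]
    rcases eq_or_ne (frobInner (Z r) (Z r)) 0 with h | h
    · simp [frobInner_self_eq_zero.1 h]
    · calc Z r i j ^ 2 = frobInner (Z r) (Z r) * (Z r i j ^ 2 / frobInner (Z r) (Z r)) := by
            field_simp
        _ ≤ W * (Z r i j ^ 2 / frobInner (Z r) (Z r)) :=
            mul_le_mul_of_nonneg_right (hW r hr) (div_nonneg (sq_nonneg _)
              (frobInner_self_nonneg _))
        _ = _ := by ring
  calc 2 * ∑ r ∈ s, Z r i j ^ 2
      ≤ 2 * ∑ r ∈ s, W / 4 * (frobInner E (Z r) ^ 2 / frobInner (Z r) (Z r)) := by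
        gcongr with r hr; exact hterm r hr
    _ ≤ 2 * (W / 4 * 2) := by rw [← mul_sum]; gcongr; rwa [← hEE]
    _ = W := by ring

theorem sum_frobInner_lie_diagonal_le (d : n → ℝ) {s : Finset ι} {Z : ι → Matrix n n ℝ}
    (hsymm : ∀ r ∈ s, (Z r).IsSymm)
    (horth : (s : Set ι).Pairwise fun r t => frobInner (Z r) (Z t) = 0)
    {W : ℝ} (hW0 : 0 ≤ W) (hW : ∀ r ∈ s, frobInner (Z r) (Z r) ≤ W) :
    ∑ r ∈ s, frobInner ⁅diagonal d, Z r⁆ ⁅diagonal d, Z r⁆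
      ≤ frobInner (diagonal d) (diagonal d) * (∑ r ∈ s, frobInner (Z r) (Z r) + W) := by
  set w : n → n → ℝ := fun i j => ∑ r ∈ s, Z r i j ^ 2
  have hlhs : ∑ r ∈ s, frobInner ⁅diagonal d, Z r⁆ ⁅diagonal d, Z r⁆
      = ∑ i, ∑ j, (d i - d j) ^ 2 * w i j := by
    simp only [frobInner, lie_diagonal_apply, w, mul_sum]
    rw [Finset.sum_comm]
    refine sum_congr rfl fun i _ => ?_
    rw [Finset.sum_comm]
    exact sum_congr rfl fun j _ => sum_congr rfl fun r _ => by ring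
  have htotal : ∑ r ∈ s, frobInner (Z r) (Z r) = ∑ i, ∑ j, w i j := by
    simp only [frobInner, w, sq]
    rw [Finset.sum_comm]
    exact sum_congr rfl fun i _ => Finset.sum_comm
  rw [hlhs, htotal, frobInner_diagonal_self]
  refine sum_sum_sq_sub_mul_le d w (fun i j => sum_congr rfl fun r hr => ?_)
    (fun i j => sum_nonneg fun r _ => sq_nonneg _) hW0
    (fun i j hij => two_mul_sum_sq_apply_le hsymm horth hW0 hW hij)
  rw [(hsymm r hr).apply]

theorem sum_frobInner_lie_le {X : Matrix n n ℝ} (hX : X.IsSymm) {s : Finset ι}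
    {Y : ι → Matrix n n ℝ} (hsymm : ∀ r ∈ s, (Y r).IsSymm)
    (horth : (s : Set ι).Pairwise fun r t => frobInner (Y r) (Y t) = 0)
    {W : ℝ} (hW0 : 0 ≤ W) (hW : ∀ r ∈ s, frobInner (Y r) (Y r) ≤ W) :
    ∑ r ∈ s, frobInner ⁅X, Y r⁆ ⁅X, Y r⁆
      ≤ frobInner X X * (∑ r ∈ s, frobInner (Y r) (Y r) + W) := by
  obtain ⟨U, hU, d, hXd⟩ := hX.exists_conj_eq_diagonal
  have hU' : U * Uᵀ = 1 := (mem_orthogonalGroup_iff n ℝ).1 hU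
  have key := sum_frobInner_lie_diagonal_le d (Z := fun r => Uᵀ * Y r * U)
    (fun r hr => (hsymm r hr).transpose_mul_mul)
    (fun r hr t ht hrt => by simpa [frobInner_conj hU'] using horth hr ht hrt)
    hW0 (fun r hr => by simpa [frobInner_conj hU'] using hW r hr)
  simpa only [← hXd, ← conj_lie hU', frobInner_conj hU'] using key

def lieNormSqMatrix (E : ι → Matrix n n ℝ) : Matrix ι ι ℝ :=
  of fun r t => frobInner ⁅E r, E t⁆ ⁅E r, E t⁆

theorem isSymm_lieNormSqMatrix (E : ι → Matrix n n ℝ) : (lieNormSqMatrix E).IsSymm := by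
  ext r t
  simp only [lieNormSqMatrix, transpose_apply, of_apply, ← lie_skew (E r)]
  simp [frobInner]

theorem lieNormSqMatrix_mulVec_le_one [Fintype ι] [DecidableEq ι] {E : ι → Matrix n n ℝ}
    (hsymm : ∀ r, (E r).IsSymm)
    (horth : Pairwise fun r t => frobInner (E r) (E t) = 0)
    (hnorm : ∀ r, frobInner (E r) (E r) ≤ 1) {b : ι → ℝ} (hb : b ∈ stdSimplex ℝ ι) {k : ι}
    (hk : ∀ u, b u ≤ b k) : (lieNormSqMatrix E *ᵥ b) k ≤ 1 := by
  have hbk := pos_of_forall_le_of_mem_stdSimplex hb hk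
  set Y : ι → Matrix n n ℝ := fun u => √(b u) • E u
  have hY : ∀ u, frobInner (Y u) (Y u) ≤ b u := fun u => by
    rw [frobInner_smul_self, Real.sq_sqrt (hb.1 u)]
    exact mul_le_of_le_one_right (hb.1 u) (hnorm u)
  have hrow := sum_frobInner_lie_le ((hsymm k).smul √(b k)) (s := univ.erase k) (Y := Y)
    (fun u _ => (hsymm u).smul √(b u))
    (fun u _ t _ hut => by simp [Y, frobInner_smul_left, frobInner_smul_right, horth hut])
    hbk.le (fun u _ => (hY u).trans (hk u))
  have hlhs : ∑ u ∈ univ.erase k, frobInner ⁅Y k, Y u⁆ ⁅Y k, Y u⁆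
      = b k * (lieNormSqMatrix E *ᵥ b) k := by
    have hkk : lieNormSqMatrix E k k = 0 := by simp [lieNormSqMatrix, frobInner]
    calc _ = ∑ u ∈ univ.erase k, b k * (lieNormSqMatrix E k u * b u) :=
          sum_congr rfl fun u _ => by
            rw [frobInner_lie_sqrt_smul (hb.1 k) (hb.1 u), lieNormSqMatrix, of_apply]; ring
      _ = ∑ u, b k * (lieNormSqMatrix E k u * b u) := by
          rw [← sum_erase_add univ _ (mem_univ k), hkk, zero_mul, mul_zero, add_zero]
      _ = b k * (lieNormSqMatrix E *ᵥ b) k := (mul_sum _ _ _).symm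
  have hrhs : frobInner (Y k) (Y k) * (∑ u ∈ univ.erase k, frobInner (Y u) (Y u) + b k)
      ≤ b k * 1 := by
    refine mul_le_mul (hY k) ?_ (add_nonneg (sum_nonneg fun u _ => frobInner_self_nonneg _)
      hbk.le) hbk.le
    calc _ ≤ ∑ u ∈ univ.erase k, b u + b k := by gcongr with u; exact hY u
      _ = 1 := by rw [sum_erase_add _ _ (mem_univ k), hb.2]
  rw [hlhs] at hrow
  exact le_of_mul_le_mul_left (hrow.trans hrhs) hbk

theorem sum_sum_frobInner_lie_le_of_pairwise_orthogonal [Fintype ι] [DecidableEq ι]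
    {B : ι → Matrix n n ℝ} (hsymm : ∀ r, (B r).IsSymm)
    (horth : Pairwise fun r t => frobInner (B r) (B t) = 0) :
    ∑ r, ∑ t, frobInner ⁅B r, B t⁆ ⁅B r, B t⁆ ≤ (∑ r, frobInner (B r) (B r)) ^ 2 := by
  set a : ι → ℝ := fun r => frobInner (B r) (B r)
  have ha : ∀ r, 0 ≤ a r := fun r => frobInner_self_nonneg _
  set E : ι → Matrix n n ℝ := fun r => (√(a r))⁻¹ • B r
  have hB : ∀ r, B r = √(a r) • E r := by
    intro r
    rcases (ha r).eq_or_lt with h | h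
    · simp [E, frobInner_self_eq_zero.1 h.symm]
    · exact (smul_inv_smul₀ (Real.sqrt_pos.2 h).ne' _).symm
  have hE : ∀ r, frobInner (E r) (E r) ≤ 1 := fun r => by
    rw [frobInner_smul_self, inv_pow, Real.sq_sqrt (ha r)]
    exact inv_mul_le_one_of_le₀ le_rfl (ha r)
  have hlie : ∀ r t, frobInner ⁅B r, B t⁆ ⁅B r, B t⁆ = a r * (lieNormSqMatrix E r t * a t) := by
    intro r t
    rw [hB r, hB t, frobInner_lie_sqrt_smul (ha r) (ha t), lieNormSqMatrix, of_apply]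
    ring
  have hquad := dotProduct_mulVec_le_sq_sum (isSymm_lieNormSqMatrix E)
    (fun b hb k hk => lieNormSqMatrix_mulVec_le_one (fun r => (hsymm r).smul (√(a r))⁻¹)
      (fun r t hrt => by simp [frobInner_smul_left, frobInner_smul_right, horth hrt]) hE hb hk)
    (x := a) ha
  simpa only [hlie, dotProduct, mulVec, mul_sum] using hquad

end Frobenius

section Rotation

variable {n ι : Type*} [Fintype ι]

def rotateFamily (U : Matrix ι ι ℝ) (A : ι → Matrix n n ℝ) (k : ι) : Matrix n n ℝ :=
  ∑ r, U r k • A r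

theorem isSymm_rotateFamily (U : Matrix ι ι ℝ) {A : ι → Matrix n n ℝ} (hA : ∀ r, (A r).IsSymm)
    (k : ι) : (rotateFamily U A k).IsSymm := by
  simp only [rotateFamily, IsSymm, transpose_sum, transpose_smul, (hA _).eq]

variable [Fintype n]

theorem frobInner_rotateFamily (U : Matrix ι ι ℝ) (A : ι → Matrix n n ℝ) (k l : ι) :
    frobInner (rotateFamily U A k) (rotateFamily U A l)
      = (Uᵀ * of (fun r t => frobInner (A r) (A t)) * U) k l := by
  simp only [rotateFamily, frobInner_sum_left, frobInner_sum_right, frobInner_smul_left,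
    frobInner_smul_right, mul_apply, transpose_apply, of_apply, mul_sum, sum_mul]
  exact sum_congr rfl fun _ _ => sum_congr rfl fun _ _ => by ring

theorem sum_frobInner_rotateFamily_self [DecidableEq ι] {U : Matrix ι ι ℝ} (hU : U * Uᵀ = 1)
    (A : ι → Matrix n n ℝ) :
    ∑ k, frobInner (rotateFamily U A k) (rotateFamily U A k) = ∑ r, frobInner (A r) (A r) := by
  simp only [frobInner_rotateFamily]
  change trace _ = _
  rw [Matrix.mul_assoc, trace_mul_comm, Matrix.mul_assoc, hU, Matrix.mul_one]
  rfl

theorem exists_rotateFamily_pairwise_orthogonal [DecidableEq ι] (A : ι → Matrix n n ℝ) :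
    ∃ U : Matrix ι ι ℝ, U * Uᵀ = 1 ∧
      Pairwise fun k l => frobInner (rotateFamily U A k) (rotateFamily U A l) = 0 := by
  have hG : (of fun r t => frobInner (A r) (A t)).IsSymm := by
    ext r t
    simp [frobInner_comm]
  obtain ⟨U, hU, d, hd⟩ := hG.exists_conj_eq_diagonal
  refine ⟨U, (mem_orthogonalGroup_iff ι ℝ).1 hU, fun k l hkl => ?_⟩
  dsimp only
  rw [frobInner_rotateFamily, hd, diagonal_apply_ne _ hkl]

variable [DecidableEq n]

theorem rotateFamily_lie (U : Matrix ι ι ℝ) (A : ι → Matrix n n ℝ) (k : ι) (X : Matrix n n ℝ) :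
    ⁅rotateFamily U A k, X⁆ = rotateFamily U (fun r => ⁅A r, X⁆) k := by
  simp only [rotateFamily, sum_lie, smul_lie]

theorem lie_rotateFamily (U : Matrix ι ι ℝ) (A : ι → Matrix n n ℝ) (k : ι) (X : Matrix n n ℝ) :
    ⁅X, rotateFamily U A k⁆ = rotateFamily U (fun r => ⁅X, A r⁆) k := by
  simp only [rotateFamily, lie_sum, lie_smul]

theorem sum_sum_frobInner_lie_rotateFamily [DecidableEq ι] {U : Matrix ι ι ℝ} (hU : U * Uᵀ = 1)
    (A : ι → Matrix n n ℝ) :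
    ∑ k, ∑ l, frobInner ⁅rotateFamily U A k, rotateFamily U A l⁆
        ⁅rotateFamily U A k, rotateFamily U A l⁆
      = ∑ r, ∑ s, frobInner ⁅A r, A s⁆ ⁅A r, A s⁆ := by
  simp only [rotateFamily_lie]
  rw [Finset.sum_comm]
  simp only [sum_frobInner_rotateFamily_self hU, lie_rotateFamily]
  rw [Finset.sum_comm]
  simp only [sum_frobInner_rotateFamily_self hU]

end Rotation

end Matrix

theorem ddvv_inequality_general (m p : ℕ)
    (A : Fin p → Matrix (Fin m) (Fin m) ℝ)
    (hsymm : ∀ r, (A r).IsSymm) :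
    ∑ r, ∑ s, frobSq (A r * A s - A s * A r) ≤ (∑ r, frobSq (A r)) ^ 2 := by
  obtain ⟨U, hU, horth⟩ := exists_rotateFamily_pairwise_orthogonal A
  have h := sum_sum_frobInner_lie_le_of_pairwise_orthogonal (isSymm_rotateFamily U hsymm) horth
  rw [sum_sum_frobInner_lie_rotateFamily hU, sum_frobInner_rotateFamily_self hU] at h
  simpa only [frobSq_eq_frobInner, Ring.lie_def] using h

/-- The DDVV inequality (Ge–Tang, Lu): for real symmetric traceless matrices
`A 1, …, A p`, one has `∑ r s, ‖[A r, A s]‖² ≤ (∑ r, ‖A r‖²)²`. -/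
theorem ddvv_inequality (m p : ℕ) (hm : 2 ≤ m) (hp : 1 ≤ p)
    (A : Fin p → Matrix (Fin m) (Fin m) ℝ)
    (hsymm : ∀ r, (A r).IsSymm) (htr : ∀ r, (A r).trace = 0) :
    ∑ r, ∑ s, frobSq (A r * A s - A s * A r) ≤ (∑ r, frobSq (A r)) ^ 2 :=
  ddvv_inequality_general m p A hsymm
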